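/- arXiv:2507.11142 — 8 statements merged into one kernel-verified Lean document; each statement's English description precedes it below -/
import Mathlib

section
/- For every natural number d, every pair of angle sequences θ, φ : {0,…,d} → ℝ, and every λ ∈ ℝ, there exist polynomials P, Q ∈ ℂ[z] with deg P ≤ d and deg Q ≤ d such that for every z ∈ ℂ the 2×2 matrix product (∏_{j=d}^{1} R(θ_j, φ_j, 0) · diag(z, 1)) · R(θ_0, φ_0, λ) (factors ordered with j = d leftmost) has (1,1)-entry equal to P(z) and (2,1)-entry equal to Q(z); moreover |P(z)|² + |Q(z)|² = 1 for every z ∈ ℂ with |z| = 1. -/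
open Complex Matrix

/-- The GQSP signal-processing rotation `R(θ, φ, λ)`. -/
noncomputable def gqspR (θ φ l : ℝ) : Matrix (Fin 2) (Fin 2) ℂ :=
  !![Complex.exp (Complex.I * (l + φ)) * Real.cos θ, Complex.exp (Complex.I * φ) * Real.sin θ;
     Complex.exp (Complex.I * l) * Real.sin θ, -(Real.cos θ : ℂ)]

/-- The GQSP matrix product
`(∏_{j=d}^{1} R(θ_j, φ_j, 0) · diag(z, 1)) · R(θ_0, φ_0, λ)`, with the factor `j = d`
leftmost; `gqspProd θ φ l z d` is this product for degree `d`. -/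
noncomputable def gqspProd (θ φ : ℕ → ℝ) (l : ℝ) (z : ℂ) : ℕ → Matrix (Fin 2) (Fin 2) ℂ
  | 0 => gqspR (θ 0) (φ 0) l
  | k + 1 => (gqspR (θ (k + 1)) (φ (k + 1)) 0 * !![z, 0; 0, 1]) * gqspProd θ φ l z k

open Polynomial
private lemma aux_unitary (w u c s : ℂ) (hw : starRingEnd ℂ w * w = 1)
    (hu : starRingEnd ℂ u * u = 1) (hcs : s ^ 2 + c ^ 2 = 1)
    (hc : starRingEnd ℂ c = c) (hs : starRingEnd ℂ s = s) :
    star (!![w * u * c, u * s; w * s, -c]) * !![w * u * c, u * s; w * s, -c] = 1 := by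
  ext i j
  fin_cases i <;> fin_cases j <;>
    simp [Matrix.mul_apply, Fin.sum_univ_two, Matrix.conjTranspose_apply, Matrix.one_apply,
      _root_.map_mul]
  · linear_combination (starRingEnd ℂ w * starRingEnd ℂ u * w * u * c) * hc +
      (starRingEnd ℂ w * w * s) * hs +
      (starRingEnd ℂ u * u * c ^ 2 + s ^ 2) * hw + c ^ 2 * hu + hcs
  · linear_combination (starRingEnd ℂ w * starRingEnd ℂ u * u * s) * hc -
      (starRingEnd ℂ w * c) * hs + (starRingEnd ℂ w * c * s) * hu
  · linear_combination (starRingEnd ℂ u * w * u * c) * hs - (w * s) * hc + w * c * s * hu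
  · linear_combination (starRingEnd ℂ u * u * s) * hs + c * hc + s ^ 2 * hu + hcs

private lemma exp_conj_mul (x : ℝ) :
    starRingEnd ℂ (Complex.exp (Complex.I * x)) * Complex.exp (Complex.I * x) = 1 := by
  rw [← Complex.exp_conj, ← Complex.exp_add]
  simp [Complex.conj_ofReal]

private lemma gqspR_eq (θ φ l : ℝ) :
    gqspR θ φ l = !![Complex.exp (Complex.I * l) * Complex.exp (Complex.I * φ) * Real.cos θ,
      Complex.exp (Complex.I * φ) * Real.sin θ;
      Complex.exp (Complex.I * l) * Real.sin θ, -(Real.cos θ : ℂ)] := by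
  have : Complex.exp (Complex.I * (↑l + ↑φ)) =
      Complex.exp (Complex.I * l) * Complex.exp (Complex.I * φ) := by
    rw [← Complex.exp_add]; ring_nf
  ext i j
  fin_cases i <;> fin_cases j <;> simp [gqspR, this]

private lemma gqspR_unitary (θ φ l : ℝ) : star (gqspR θ φ l) * gqspR θ φ l = 1 := by
  rw [gqspR_eq]
  refine aux_unitary _ _ _ _ (exp_conj_mul l) (exp_conj_mul φ) ?_
    (Complex.conj_ofReal _) (Complex.conj_ofReal _)
  norm_cast
  exact_mod_cast Real.sin_sq_add_cos_sq θ

private lemma diag_unitary (z : ℂ) (hz : ‖z‖ = 1) :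
    star (!![z, 0; 0, 1] : Matrix (Fin 2) (Fin 2) ℂ) * !![z, 0; 0, 1] = 1 := by
  have h : starRingEnd ℂ z * z = 1 := by
    rw [Complex.conj_mul']
    norm_cast
    rw [hz]; norm_num
  ext i j
  fin_cases i <;> fin_cases j <;>
    simp [Matrix.mul_apply, Fin.sum_univ_two, Matrix.conjTranspose_apply, Matrix.one_apply, h]

private lemma gqspProd_unitary (θ φ : ℕ → ℝ) (l : ℝ) (z : ℂ) (hz : ‖z‖ = 1) :
    ∀ d, star (gqspProd θ φ l z d) * gqspProd θ φ l z d = 1 := by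
  intro d
  induction d with
  | zero => exact gqspR_unitary _ _ _
  | succ k ih =>
      show star ((gqspR (θ (k+1)) (φ (k+1)) 0 * !![z,0;0,1]) * gqspProd θ φ l z k) *
        ((gqspR (θ (k+1)) (φ (k+1)) 0 * !![z,0;0,1]) * gqspProd θ φ l z k) = 1
      set R := gqspR (θ (k+1)) (φ (k+1)) 0
      set D := (!![z,0;0,1] : Matrix (Fin 2) (Fin 2) ℂ)
      set M := gqspProd θ φ l z k
      rw [Matrix.star_mul, Matrix.star_mul, mul_assoc (star M), mul_assoc (star D),
        mul_assoc R D M, ← mul_assoc (star R) R, gqspR_unitary, one_mul,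
        ← mul_assoc (star D) D, diag_unitary z hz, one_mul, ih]

private lemma col_norm (M : Matrix (Fin 2) (Fin 2) ℂ) (h : star M * M = 1) :
    ‖M 0 0‖ ^ 2 + ‖M 1 0‖ ^ 2 = 1 := by
  have h00 := congrFun (congrFun h 0) 0
  rw [Matrix.mul_apply, Fin.sum_univ_two] at h00
  simp only [Matrix.star_apply, Matrix.one_apply_eq, RCLike.star_def] at h00
  rw [Complex.conj_mul', Complex.conj_mul'] at h00
  exact_mod_cast h00


theorem gqsp_forward (d : ℕ) (θ φ : ℕ → ℝ) (l : ℝ) :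
    ∃ P Q : Polynomial ℂ, P.natDegree ≤ d ∧ Q.natDegree ≤ d ∧
      (∀ z : ℂ, gqspProd θ φ l z d 0 0 = P.eval z ∧ gqspProd θ φ l z d 1 0 = Q.eval z) ∧
      (∀ z : ℂ, ‖z‖ = 1 → ‖P.eval z‖ ^ 2 + ‖Q.eval z‖ ^ 2 = 1) := by
  suffices h : ∃ P Q : Polynomial ℂ, P.natDegree ≤ d ∧ Q.natDegree ≤ d ∧
      (∀ z : ℂ, gqspProd θ φ l z d 0 0 = P.eval z ∧ gqspProd θ φ l z d 1 0 = Q.eval z) by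
    obtain ⟨P, Q, hP, hQ, hev⟩ := h
    refine ⟨P, Q, hP, hQ, hev, fun z hz => ?_⟩
    rw [← (hev z).1, ← (hev z).2]
    exact col_norm _ (gqspProd_unitary θ φ l z hz d)
  induction d with
  | zero =>
      refine ⟨C (Complex.exp (Complex.I * (l + φ 0)) * Real.cos (θ 0)),
        C (Complex.exp (Complex.I * l) * Real.sin (θ 0)), ?_, ?_, fun z => ?_⟩
      · exact le_of_eq (natDegree_C _)
      · exact le_of_eq (natDegree_C _)
      · constructor <;> simp [gqspProd, gqspR]
  | succ k ih =>
      obtain ⟨P, Q, hP, hQ, hev⟩ := ih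
      set a := Complex.exp (Complex.I * ((0:ℝ) + φ (k+1))) * Real.cos (θ (k+1)) with ha
      set b := Complex.exp (Complex.I * (φ (k+1) : ℝ)) * Real.sin (θ (k+1)) with hb
      set c := Complex.exp (Complex.I * (0:ℝ)) * Real.sin (θ (k+1)) with hc
      set e := -(Real.cos (θ (k+1)) : ℂ) with he
      refine ⟨C a * X * P + C b * Q, C c * X * P + C e * Q, ?_, ?_, fun z => ?_⟩
      · refine (natDegree_add_le _ _).trans (max_le ?_ ?_)
        · calc (C a * X * P).natDegree ≤ (C a * X).natDegree + P.natDegree := natDegree_mul_le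
            _ ≤ 1 + k := add_le_add ((natDegree_C_mul_le _ _).trans natDegree_X_le) hP
            _ = k + 1 := by omega
        · exact (natDegree_C_mul_le _ _).trans (hQ.trans (by omega))
      · refine (natDegree_add_le _ _).trans (max_le ?_ ?_)
        · calc (C c * X * P).natDegree ≤ (C c * X).natDegree + P.natDegree := natDegree_mul_le
            _ ≤ 1 + k := add_le_add ((natDegree_C_mul_le _ _).trans natDegree_X_le) hP
            _ = k + 1 := by omega
        · exact (natDegree_C_mul_le _ _).trans (hQ.trans (by omega))
      · have h1 := (hev z).1
        have h2 := (hev z).2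
        constructor <;>
          · show ((gqspR (θ (k+1)) (φ (k+1)) 0 * !![z,0;0,1]) * gqspProd θ φ l z k) _ _ = _
            simp [gqspR, Matrix.mul_apply, Fin.sum_univ_two, h1, h2, ha, hb, hc, he]
            try ring
end

section
/- Let d be a natural number and let P, Q ∈ ℂ[z] be polynomials with deg P ≤ d and deg Q ≤ d, with coefficient sequences a_j = coeff(P, j) and b_j = coeff(Q, j). Then |P(z)|² + |Q(z)|² = 1 for all z ∈ ℂ with |z| = 1 if and only if for every natural number k, ∑_{j=0}^{d} ( a_j · conj(a_{j+k}) + b_j · conj(b_{j+k}) ) equals 1 when k = 0 and equals 0 when k ≥ 1. -/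
/-!
With the reciprocal polynomial `P*(z) = z^d · conj (P (1 / conj z))`, the polynomial
`F = P P* + Q Q*` satisfies `F(z) = z^d (|P(z)|² + |Q(z)|²)` on the unit circle, which is
infinite; so the normalization holds iff `F = z^d`. The coefficient of `z^(d+k)` in `F` is the
conjugate of the `k`-th autocorrelation sum and that of `z^(d-k)` is the sum itself, so
`F = z^d` says exactly that the autocorrelations are `δ_{k,0}`.
-/

open Finset Polynomial

section StarReflect

variable {R : Type*} [CommSemiring R] [StarRing R]

noncomputable def starReflect (d : ℕ) (P : R[X]) : R[X] :=
  reflect d (P.map (starRingEnd R))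

def autocorrelation (d : ℕ) (P : R[X]) (k : ℕ) : R :=
  ∑ j ∈ range (d + 1), P.coeff j * starRingEnd R (P.coeff (j + k))

lemma coeff_starReflect_of_le {d i : ℕ} (P : R[X]) (hi : i ≤ d) :
    (starReflect d P).coeff i = starRingEnd R (P.coeff (d - i)) := by
  rw [starReflect, coeff_reflect, revAt_le hi, coeff_map]

lemma coeff_starReflect_of_lt {d i : ℕ} {P : R[X]} (hP : P.natDegree ≤ d) (hi : d < i) :
    (starReflect d P).coeff i = 0 := by
  rw [starReflect, coeff_reflect, revAt_eq_self_of_lt hi, coeff_map,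
    coeff_eq_zero_of_natDegree_lt (hP.trans_lt hi), map_zero]

lemma coeff_mul_starReflect_sub {d k : ℕ} {P : R[X]} (hP : P.natDegree ≤ d) (hk : k ≤ d) :
    (P * starReflect d P).coeff (d - k) = autocorrelation d P k := by
  have htail : ∀ j ∈ range (d + 1), j ∉ range (d - k + 1) →
      P.coeff j * starRingEnd R (P.coeff (j + k)) = 0 := fun j _ hj => by
    rw [mem_range] at hj
    rw [coeff_eq_zero_of_natDegree_lt (by omega : P.natDegree < j + k), map_zero, mul_zero]
  rw [coeff_mul, Nat.sum_antidiagonal_eq_sum_range_succ_mk, autocorrelation,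
    ← sum_subset (range_subset_range.mpr (by omega)) htail]
  refine sum_congr rfl fun i hi => ?_
  rw [mem_range] at hi
  rw [coeff_starReflect_of_le P (by omega), show d - (d - k - i) = i + k by omega]

lemma coeff_mul_starReflect_add {d : ℕ} {P : R[X]} (hP : P.natDegree ≤ d) (k : ℕ) :
    (P * starReflect d P).coeff (d + k) = starRingEnd R (autocorrelation d P k) := by
  rw [coeff_mul, Nat.sum_antidiagonal_eq_sum_range_succ_mk, autocorrelation, map_sum,
    Nat.succ_eq_add_one, show d + k + 1 = k + (d + 1) by omega, sum_range_add,
    sum_eq_zero fun i hi => by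
      rw [coeff_starReflect_of_lt hP (by rw [mem_range] at hi; omega), mul_zero], zero_add]
  refine sum_congr rfl fun j hj => ?_
  rw [mem_range] at hj
  rw [coeff_starReflect_of_le P (by omega), show d - (d + k - (k + j)) = j by omega, map_mul,
    starRingEnd_self_apply, mul_comm, add_comm k j]

lemma eq_X_pow_iff_of_coeff {F : R[X]} {d : ℕ} {c : ℕ → R}
    (hadd : ∀ k, F.coeff (d + k) = starRingEnd R (c k))
    (hsub : ∀ k ≤ d, F.coeff (d - k) = c k) :
    F = X ^ d ↔ ∀ k, c k = if k = 0 then 1 else 0 := by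
  constructor
  · rintro rfl k
    rw [← starRingEnd_self_apply (c k), ← hadd, coeff_X_pow]
    split_ifs <;> simp_all
  · intro hc
    ext n
    rw [coeff_X_pow]
    rcases le_or_gt n d with hn | hn
    · obtain ⟨k, hk, rfl⟩ : ∃ k ≤ d, n = d - k := ⟨d - n, by omega, by omega⟩
      rw [hsub k hk, hc]
      split_ifs <;> first | rfl | omega
    · obtain ⟨k, rfl⟩ := Nat.exists_eq_add_of_le hn.le
      rw [hadd, hc]
      split_ifs <;> first | omega | simp

end StarReflect

lemma eval_starReflect {d : ℕ} {P : ℂ[X]} (hP : P.natDegree ≤ d) {z : ℂ} (hz : ‖z‖ = 1) :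
    (starReflect d P).eval z = z ^ d * starRingEnd ℂ (P.eval z) := by
  have hz0 : z ≠ 0 := by rintro rfl; simp at hz
  have : Invertible z⁻¹ := invertibleOfNonzero (inv_ne_zero hz0)
  have key := eval₂_reflect_mul_pow (RingHom.id ℂ) z⁻¹ d (P.map (starRingEnd ℂ))
    (natDegree_map_le.trans hP)
  have hconj : eval₂ (starRingEnd ℂ) z⁻¹ P = starRingEnd ℂ (P.eval z) := by
    rw [Complex.inv_eq_conj hz, eval₂_at_apply]
  rw [invOf_eq_inv, inv_inv, ← eval, ← eval, eval_map, hconj] at key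
  rw [starReflect, ← key, inv_pow, mul_comm _ (z ^ d)⁻¹, mul_inv_cancel_left₀ (pow_ne_zero d hz0)]

lemma eval_mul_starReflect {d : ℕ} {P : ℂ[X]} (hP : P.natDegree ≤ d) {z : ℂ} (hz : ‖z‖ = 1) :
    (P * starReflect d P).eval z = z ^ d * (‖P.eval z‖ ^ 2 : ℝ) := by
  rw [eval_mul, eval_starReflect hP hz, Complex.ofReal_pow, ← Complex.mul_conj']
  ring

lemma Complex.infinite_sphere {r : ℝ} (hr : 0 < r) (c : ℂ) : (Metric.sphere c r).Infinite :=
  (isPreconnected_sphere (by simp) c r).infinite_of_nontrivial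
    ⟨c + r, by simp [abs_of_pos hr], c - r, by simp [abs_of_pos hr], fun h => by
      have := congrArg Complex.re h
      simp only [add_re, sub_re, ofReal_re] at this
      linarith⟩

lemma eq_X_pow_iff_normSq_add_eq_one {d : ℕ} {P Q : ℂ[X]} (hP : P.natDegree ≤ d)
    (hQ : Q.natDegree ≤ d) :
    P * starReflect d P + Q * starReflect d Q = X ^ d ↔
      ∀ z : ℂ, ‖z‖ = 1 → ‖P.eval z‖ ^ 2 + ‖Q.eval z‖ ^ 2 = 1 := by
  have heval : ∀ z : ℂ, ‖z‖ = 1 → (P * starReflect d P + Q * starReflect d Q).eval z =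
      z ^ d * ((‖P.eval z‖ ^ 2 + ‖Q.eval z‖ ^ 2 : ℝ) : ℂ) := fun z hz => by
    rw [eval_add, eval_mul_starReflect hP hz, eval_mul_starReflect hQ hz, Complex.ofReal_add,
      mul_add]
  constructor
  · intro hF z hz
    have hz0 : z ^ d ≠ 0 := pow_ne_zero d (by rintro rfl; simp at hz)
    have := heval z hz
    rw [hF, eval_pow, eval_X] at this
    exact_mod_cast (mul_eq_left₀ hz0).mp this.symm
  · intro hnorm
    refine eq_of_infinite_eval_eq _ _ ((Complex.infinite_sphere one_pos 0).mono fun z hz => ?_)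
    rw [mem_sphere_zero_iff_norm] at hz
    rw [Set.mem_ofPred_eq, heval z hz, hnorm z hz, eval_pow, eval_X, Complex.ofReal_one, mul_one]

/-- Fourier-coefficient characterization of the GQSP normalization condition:
`|P(z)|² + |Q(z)|² = 1` on the unit circle iff the autocorrelations of the coefficient
sequences satisfy `∑_j (a_j conj(a_{j+k}) + b_j conj(b_{j+k})) = δ_{k,0}`. -/
theorem gqsp_normalization_iff_autocorrelation (d : ℕ) (P Q : Polynomial ℂ)
    (hP : P.natDegree ≤ d) (hQ : Q.natDegree ≤ d) :
    (∀ z : ℂ, ‖z‖ = 1 → ‖P.eval z‖ ^ 2 + ‖Q.eval z‖ ^ 2 = 1) ↔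
      ∀ k : ℕ,
        (∑ j ∈ Finset.range (d + 1),
            (P.coeff j * (starRingEnd ℂ) (P.coeff (j + k)) +
              Q.coeff j * (starRingEnd ℂ) (Q.coeff (j + k)))) =
          if k = 0 then 1 else 0 := by
  simp only [sum_add_distrib]
  rw [← eq_X_pow_iff_normSq_add_eq_one hP hQ]
  refine eq_X_pow_iff_of_coeff (c := fun k => autocorrelation d P k + autocorrelation d Q k)
    (fun k => ?_) (fun k hk => ?_)
  · rw [coeff_add, coeff_mul_starReflect_add hP, coeff_mul_starReflect_add hQ, map_add]
  · rw [coeff_add, coeff_mul_starReflect_sub hP hk, coeff_mul_starReflect_sub hQ hk]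
end

section
/- Let R be a commutative ring and let x, s ∈ R satisfy x² + s² = 1. Then for every natural number k, the k-th power of the 2×2 matrix with rows (x, −s) and (s, x) equals the 2×2 matrix with rows (T_k(x), −s·U_{k−1}(x)) and (s·U_{k−1}(x), T_k(x)), where T_k and U_k denote the Chebyshev polynomials of the first and second kind (with the convention U_{−1} = 0) evaluated at x. -/
open Polynomial Polynomial.Chebyshev

/-- Powers of the rotation-like matrix `!![x, -s; s, x]` (with `x² + s² = 1`) are given by
Chebyshev polynomials of the first and second kind. -/
theorem rotation_matrix_pow_chebyshev (R : Type*) [CommRing R] (x s : R)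
    (h : x ^ 2 + s ^ 2 = 1) (k : ℕ) :
    (!![x, -s; s, x]) ^ k =
      !![(Polynomial.Chebyshev.T R k).eval x,
          -(s * (Polynomial.Chebyshev.U R ((k : ℤ) - 1)).eval x);
         s * (Polynomial.Chebyshev.U R ((k : ℤ) - 1)).eval x,
          (Polynomial.Chebyshev.T R k).eval x] := by
  induction k with
  | zero => simp [Matrix.one_fin_two]
  | succ k ih =>
    rw [pow_succ, ih]
    have hT := T_eq_X_mul_T_sub_pol_U R ((k : ℤ) - 1)
    have hU := U_eq_X_mul_U_add_T R ((k : ℤ) - 1)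
    apply_fun (Polynomial.eval x) at hT hU
    simp only [eval_sub, eval_add, eval_mul, eval_X, eval_one, eval_pow] at hT hU
    push_cast
    simp only [show ((k : ℤ) - 1 + 2) = (k : ℤ) + 1 by ring, show ((k : ℤ) - 1 + 1) = (k : ℤ) by ring, show ((k : ℤ) + 1 - 1) = (k : ℤ) by ring] at hT hU ⊢
    ext i j
    fin_cases i <;> fin_cases j <;>
      simp [Matrix.mul_apply, Fin.sum_univ_succ] <;>
      first
        | linear_combination s * hU
        | linear_combination (-s) * hU
        | linear_combination (eval x (Polynomial.Chebyshev.U R ((k:ℤ)-1))) * h - hT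
        | linear_combination -(eval x (Polynomial.Chebyshev.U R ((k:ℤ)-1))) * h - hT
end

section
/- For every natural number n, the following identity of polynomials over ℝ holds: X^n = 2^{1−n} · ∑_{k=1, k ≡ n (mod 2)}^{n} binom(n, (n−k)/2) · T_k + c_0, where c_0 = 2^{−n} · binom(n, n/2) if n is even and c_0 = 0 if n is odd, and T_k denotes the k-th Chebyshev polynomial of the first kind. -/
open Polynomial Polynomial.Chebyshev Finset
open scoped LaurentPolynomial

/-!
Under the substitution `X = (t + t⁻¹) / 2` the Chebyshev polynomial `T_m` becomes `(t^m + t⁻ᵐ) / 2`.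
Accordingly, the linear map `t^m ↦ T_m` on Laurent polynomials intertwines multiplication by
`t + t⁻¹` with multiplication by `2X` (this is `2X T_m = T_{m+1} + T_{m-1}`), so the binomial
expansion of `(t⁻¹ + t)^n` gives `(2X)^n = ∑ⱼ C(n, j) T_{n-2j}`. Since `T_{-m} = T_m`, the terms
`j` and `n - j` agree, so each `T_k` with `k > 0` occurs twice and the central term once.
-/

theorem Finset.sum_range_succ_eq_two_nsmul_of_symm {M : Type*} [AddCommMonoid M] {f : ℕ → M}
    (n : ℕ) (hf : ∀ j ≤ n, f (n - j) = f j) :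
    ∑ j ∈ range (n + 1), f j =
      2 • ∑ j ∈ range (n + 1) with 2 * j < n, f j + if n % 2 = 0 then f (n / 2) else 0 := by
  have upper : ∑ j ∈ range (n + 1) with n < 2 * j, f j =
      ∑ j ∈ range (n + 1) with 2 * j < n, f j := by
    rw [sum_filter, sum_filter, ← sum_range_reflect]
    refine sum_congr rfl fun j hj => ?_
    have hj : j ≤ n := Nat.lt_succ_iff.mp (mem_range.mp hj)
    rw [Nat.add_sub_cancel, hf j hj]
    congr 1
    exact propext (by omega)
  have middle : ∑ j ∈ range (n + 1) with 2 * j = n, f j =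
      if n % 2 = 0 then f (n / 2) else 0 := by
    split_ifs with hn
    · rw [show (range (n + 1)).filter (2 * · = n) = {n / 2} by ext; simp; omega, sum_singleton]
    · rw [show (range (n + 1)).filter (2 * · = n) = ∅ by ext; simp; omega, sum_empty]
  calc ∑ j ∈ range (n + 1), f j
      = ∑ j ∈ range (n + 1), ((if 2 * j < n then f j else 0) + (if n < 2 * j then f j else 0) +
          if 2 * j = n then f j else 0) :=
        sum_congr rfl fun j _ => by split_ifs <;> first | omega | simp
    _ = _ := by rw [sum_add_distrib, sum_add_distrib, ← sum_filter, ← sum_filter, ← sum_filter,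
          upper, middle, two_nsmul]

namespace Polynomial.Chebyshev

variable (R : Type*) [CommRing R]

theorem two_mul_X_mul_T (m : ℤ) : 2 * X * T R m = T R (m + 1) + T R (m - 1) := by
  rw [T_add_one]; ring

noncomputable def ofLaurent : R[T;T⁻¹] →ₗ[R] R[X] :=
  (AddMonoidAlgebra.basis ℤ R).constr R fun m => T R m

theorem ofLaurent_T (m : ℤ) : ofLaurent R (LaurentPolynomial.T m) = T R m :=
  (AddMonoidAlgebra.basis ℤ R).constr_basis R _ m

theorem ofLaurent_T_neg_one_add_T_one_mul (p : R[T;T⁻¹]) :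
    ofLaurent R ((LaurentPolynomial.T (-1) + LaurentPolynomial.T 1) * p) =
      2 * X * ofLaurent R p := by
  induction p using LaurentPolynomial.induction_on' with
  | add p q hp hq => rw [mul_add, map_add, map_add, hp, hq, mul_add]
  | C_mul_T m a =>
    rw [← LaurentPolynomial.smul_eq_C_mul, mul_smul_comm, add_mul, ← LaurentPolynomial.T_add,
      ← LaurentPolynomial.T_add, map_smul, map_smul, map_add, ofLaurent_T, ofLaurent_T,
      ofLaurent_T, mul_smul_comm, two_mul_X_mul_T]
    ring_nf

theorem ofLaurent_T_neg_one_add_T_one_pow (n : ℕ) :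
    ofLaurent R ((LaurentPolynomial.T (-1) + LaurentPolynomial.T 1) ^ n) = (2 * X) ^ n := by
  induction n with
  | zero => simpa using ofLaurent_T R 0
  | succ n ih => rw [pow_succ', ofLaurent_T_neg_one_add_T_one_mul, ih, pow_succ']

theorem T_neg_one_add_T_one_pow (n : ℕ) :
    (LaurentPolynomial.T (-1) + LaurentPolynomial.T 1 : R[T;T⁻¹]) ^ n =
      ∑ j ∈ range (n + 1), (n.choose j : R) • LaurentPolynomial.T (n - 2 * j) := by
  rw [add_pow]
  refine sum_congr rfl fun j hj => ?_
  rw [LaurentPolynomial.T_pow, LaurentPolynomial.T_pow, ← LaurentPolynomial.T_add,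
    Nat.cast_smul_eq_nsmul, nsmul_eq_mul', Nat.cast_sub (by simpa [Nat.lt_succ_iff] using hj)]
  congr 2
  ring

theorem two_mul_X_pow_eq_sum (n : ℕ) :
    (2 * X : R[X]) ^ n = ∑ j ∈ range (n + 1), (n.choose j : R) • T R (n - 2 * j) := by
  rw [← ofLaurent_T_neg_one_add_T_one_pow, T_neg_one_add_T_one_pow, map_sum]
  simp only [map_smul, ofLaurent_T]

theorem sum_range_choose_smul_T (n : ℕ) :
    ∑ j ∈ range (n + 1), (n.choose j : R) • T R (n - 2 * j) =
      2 • ∑ k ∈ range (n + 1) with 1 ≤ k ∧ k % 2 = n % 2, (n.choose ((n - k) / 2) : R) • T R k +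
        if n % 2 = 0 then (n.choose (n / 2) : R) • 1 else 0 := by
  have reflect : ∀ j ≤ n, (n.choose (n - j) : R) • T R (n - 2 * (n - j : ℕ)) =
      (n.choose j : R) • T R (n - 2 * j) := fun j hj => by
    rw [Nat.choose_symm hj, Nat.cast_sub hj, ← T_neg]
    ring_nf
  have lower : ∑ j ∈ range (n + 1) with 2 * j < n, (n.choose j : R) • T R (n - 2 * j) =
      ∑ k ∈ range (n + 1) with 1 ≤ k ∧ k % 2 = n % 2, (n.choose ((n - k) / 2) : R) • T R k := by
    refine sum_nbij' (fun j => n - 2 * j) (fun k => (n - k) / 2) ?_ ?_ ?_ ?_ ?_ <;>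
      intro j hj <;> simp only [mem_filter, mem_range] at hj ⊢
    any_goals omega
    rw [show (n - (n - 2 * j)) / 2 = j by omega, Nat.cast_sub (by omega)]
    push_cast
    rfl
  rw [sum_range_succ_eq_two_nsmul_of_symm n reflect, lower]
  split_ifs with hn
  · rw [show (n : ℤ) - 2 * (n / 2 : ℕ) = 0 by omega, T_zero]
  · rfl

end Polynomial.Chebyshev

/-- Expansion of the monomial `X^n` in Chebyshev polynomials of the first kind:
`X^n = 2^{1−n} ∑_{k=1, k ≡ n [mod 2]}^{n} C(n, (n−k)/2) T_k + c₀`, where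
`c₀ = 2^{−n} C(n, n/2)` if `n` is even and `c₀ = 0` if `n` is odd. -/
theorem monomial_eq_chebyshev_sum (n : ℕ) :
    (Polynomial.X : Polynomial ℝ) ^ n =
      ((2 : ℝ) ^ ((1 : ℤ) - (n : ℤ))) •
          (∑ k ∈ (Finset.range (n + 1)).filter (fun k => 1 ≤ k ∧ k % 2 = n % 2),
            ((n.choose ((n - k) / 2) : ℝ)) • Polynomial.Chebyshev.T ℝ (k : ℤ)) +
        (if n % 2 = 0 then
            ((2 : ℝ) ^ (-(n : ℤ)) * (n.choose (n / 2) : ℝ)) • (1 : Polynomial ℝ)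
          else 0) := by
  have h := two_mul_X_pow_eq_sum ℝ n
  rw [sum_range_choose_smul_T, mul_pow, ← C_ofNat, ← C_pow, ← smul_eq_C_mul] at h
  have h2n : (2 : ℝ) ^ n ≠ 0 := pow_ne_zero n two_ne_zero
  refine smul_right_injective _ h2n ?_
  have two_pow_mul_two_zpow (m : ℤ) : (2 : ℝ) ^ n * 2 ^ m = 2 ^ (n + m) := by
    rw [← zpow_natCast, ← zpow_add₀ two_ne_zero]
  simp only [h, smul_add, smul_smul, smul_ite, smul_zero, ← mul_assoc, two_pow_mul_two_zpow,
    add_sub_cancel, add_neg_cancel, zpow_one, zpow_zero, one_mul, ofNat_smul_eq_nsmul]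
end

section
/- Let E be a nonzero finite-dimensional complex inner product space, T : E → E a self-adjoint linear map, and μ an eigenvalue of T such that μ ≠ 0 and |ν| < |μ| for every eigenvalue ν of T with ν ≠ μ. Let P denote the orthogonal projection of E onto the eigenspace ker(T − μ·id). Then for every ψ ∈ E, the sequence μ^{−n} • T^n ψ converges to P ψ as n → ∞. -/
open Filter Module Module.End Topology

/-!
Write `ψ = P ψ + w` with `w ⟂ ker (T - μ)`. The first part is fixed by `μ⁻¹ T`. Expanding `w`
along the orthogonal eigenspace decomposition of `T`, its component in the `ν`-eigenspace is
multiplied by `(ν / μ)ⁿ`, which tends to `0` because `μ` strictly dominates every other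
eigenvalue, while its `μ`-component vanishes.
-/

theorem Module.End.pow_apply_of_mem_eigenspace {R M : Type*} [CommRing R] [AddCommGroup M]
    [Module R M] {f : End R M} {μ : R} {x : M} (hx : x ∈ f.eigenspace μ) (n : ℕ) :
    (f ^ n) x = μ ^ n • x := by
  induction n with
  | zero => simp
  | succ n ih => rw [pow_succ', mul_apply, ih, map_smul, mem_eigenspace_iff.mp hx, smul_smul,
      pow_succ]

namespace LinearMap.IsSymmetric

variable {𝕜 E : Type*} [RCLike 𝕜] [NormedAddCommGroup E] [InnerProductSpace 𝕜 E]
  [FiniteDimensional 𝕜 E] {T : E →ₗ[𝕜] E}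

theorem sum_starProjection_eigenspace (hT : T.IsSymmetric) (x : E) :
    ∑ ν : Eigenvalues T, (eigenspace T ν).starProjection x = x :=
  hT.orthogonalFamily_eigenspaces'.sum_projection_of_mem_iSup x <| by
    rw [hT.direct_sum_isInternal.submodule_iSup_eq_top]; exact Submodule.mem_top

theorem pow_apply_eq_sum_eigenspace (hT : T.IsSymmetric) (x : E) (n : ℕ) :
    (T ^ n) x = ∑ ν : Eigenvalues T, (ν : 𝕜) ^ n • (eigenspace T ν).starProjection x := by
  conv_lhs => rw [← hT.sum_starProjection_eigenspace x]
  rw [map_sum]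
  exact Finset.sum_congr rfl fun ν _ =>
    pow_apply_of_mem_eigenspace (Submodule.starProjection_apply_mem _ x) n

theorem tendsto_inv_pow_smul_pow_apply_of_mem_orthogonal (hT : T.IsSymmetric) {μ : 𝕜}
    (hdom : ∀ ν : 𝕜, HasEigenvalue T ν → ν ≠ μ → ‖ν‖ < ‖μ‖) {x : E}
    (hx : x ∈ (eigenspace T μ)ᗮ) :
    Tendsto (fun n : ℕ => (μ ^ n)⁻¹ • (T ^ n) x) atTop (𝓝 0) := by
  simp_rw [hT.pow_apply_eq_sum_eigenspace, Finset.smul_sum, smul_smul]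
  rw [← Finset.sum_const_zero (s := (Finset.univ : Finset (Eigenvalues T))) (M := E)]
  refine tendsto_finsetSum _ fun ν _ => ?_
  by_cases hνμ : (ν : 𝕜) = μ
  · rw [hνμ, (eigenspace T μ).starProjection_apply_eq_zero_iff.mpr hx]
    simp
  · have hlt : ‖μ⁻¹ * ν‖ < 1 := by
      have hνμ' := hdom ν ν.2 hνμ
      rwa [norm_mul, norm_inv, inv_mul_lt_one₀ ((norm_nonneg _).trans_lt hνμ')]
    simpa only [mul_pow, inv_pow, zero_smul] using
      (tendsto_pow_atTop_nhds_zero_of_norm_lt_one hlt).smul_const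
        ((eigenspace T ν).starProjection x)

end LinearMap.IsSymmetric

theorem power_iteration_tendsto_general
    {E : Type*} [NormedAddCommGroup E] [InnerProductSpace ℂ E]
    [FiniteDimensional ℂ E]
    (T : Module.End ℂ E) (hT : LinearMap.IsSymmetric T)
    (μ : ℂ) (hμ0 : μ ≠ 0)
    (hdom : ∀ ν : ℂ, Module.End.HasEigenvalue T ν → ν ≠ μ → ‖ν‖ < ‖μ‖)
    (ψ : E) :
    Filter.Tendsto (fun n : ℕ => (μ ^ n)⁻¹ • ((T ^ n) ψ)) Filter.atTop
      (nhds (((Module.End.eigenspace T μ).orthogonalProjectionOnto ψ : E))) := by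
  set K := eigenspace T μ
  have hsplit (n : ℕ) : (μ ^ n)⁻¹ • (T ^ n) ψ =
      K.starProjection ψ + (μ ^ n)⁻¹ • (T ^ n) (ψ - K.starProjection ψ) := by
    rw [map_sub, smul_sub, pow_apply_of_mem_eigenspace (K.starProjection_apply_mem ψ),
      smul_smul, inv_mul_cancel₀ (pow_ne_zero n hμ0), one_smul, add_sub_cancel]
  have hrest := hT.tendsto_inv_pow_smul_pow_apply_of_mem_orthogonal hdom
    (K.sub_starProjection_mem_orthogonal ψ)
  simpa [hsplit, ← Submodule.starProjection_apply] using
    (tendsto_const_nhds (x := K.starProjection ψ)).add hrest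

/-- Convergence of power iteration: if `μ` is the strictly dominant eigenvalue of a
self-adjoint operator `T` on a nonzero finite-dimensional complex inner product space,
then `μ⁻ⁿ Tⁿ ψ → P ψ`, where `P` is the orthogonal projection onto the `μ`-eigenspace. -/
theorem power_iteration_tendsto
    {E : Type*} [NormedAddCommGroup E] [InnerProductSpace ℂ E]
    [FiniteDimensional ℂ E] [Nontrivial E]
    (T : Module.End ℂ E) (hT : LinearMap.IsSymmetric T)
    (μ : ℂ) (hμ : Module.End.HasEigenvalue T μ) (hμ0 : μ ≠ 0)
    (hdom : ∀ ν : ℂ, Module.End.HasEigenvalue T ν → ν ≠ μ → ‖ν‖ < ‖μ‖)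
    (ψ : E) :
    Filter.Tendsto (fun n : ℕ => (μ ^ n)⁻¹ • ((T ^ n) ψ)) Filter.atTop
      (nhds (((Module.End.eigenspace T μ).orthogonalProjectionOnto ψ : E))) :=
  power_iteration_tendsto_general T hT μ hμ0 hdom ψ
end

section
/- Let E be a nonzero finite-dimensional complex inner product space, T : E → E a self-adjoint linear map, and ε a real number that is not an eigenvalue of T, so that T − ε·id is invertible. Let μ be an eigenvalue of T such that |μ − ε| < |ν − ε| for every eigenvalue ν of T with ν ≠ μ, and let P denote the orthogonal projection of E onto the eigenspace ker(T − μ·id). Then for every ψ ∈ E, the sequence (μ − ε)^n • ((T − ε·id)⁻¹)^n ψ converges to P ψ as n → ∞. -/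
/-!
Diagonalise `T` in an orthonormal eigenbasis. On an eigenvector `v` with eigenvalue `λ`, the
iterate `(μ - ε)ⁿ (T - ε)⁻ⁿ v` equals `((μ - ε) / (λ - ε))ⁿ v`: this is `v` when `λ = μ` and
tends to `0` otherwise, since `μ` is strictly closest to `ε`. The orthogonal projection onto the
`μ`-eigenspace does the same to `v`, because eigenspaces of a symmetric operator are mutually
orthogonal, and both sides are linear in `ψ`.
-/

open Filter Topology Module

theorem Module.Basis.tendsto_apply_of_tendsto_apply {ι R M N α : Type*} [Fintype ι] [Semiring R]
    [AddCommMonoid M] [Module R M] [AddCommMonoid N] [Module R N] [TopologicalSpace N]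
    [ContinuousAdd N] [ContinuousConstSMul R N] {l : Filter α} (b : Basis ι R M)
    {A : α → M →ₗ[R] N} {L : M →ₗ[R] N} (h : ∀ i, Tendsto (fun n ↦ A n (b i)) l (𝓝 (L (b i))))
    (x : M) : Tendsto (fun n ↦ A n x) l (𝓝 (L x)) := by
  rw [← b.sum_repr x]
  simp only [map_sum, map_smul]
  exact tendsto_finsetSum _ fun i _ ↦ (h i).const_smul _

namespace Module.End

theorem isUnit_sub_smul_one_of_not_hasEigenvalue {K V : Type*} [Field K] [AddCommGroup V]
    [Module K V] [FiniteDimensional K V] {f : End K V} {c : K} (h : ¬f.HasEigenvalue c) :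
    IsUnit (f - c • 1) :=
  (LinearMap.isUnit_iff_ker_eq_bot _).mpr (eigenspace_def.symm.trans (not_not.mp h))

theorem pow_apply_of_apply_eq_smul {R M : Type*} [CommSemiring R] [AddCommMonoid M] [Module R M]
    {f : End R M} {c : R} {v : M} (hv : f v = c • v) (n : ℕ) : (f ^ n) v = c ^ n • v := by
  induction n with
  | zero => simp
  | succ n ih => rw [pow_succ, mul_apply, hv, map_smul, ih, smul_smul, ← pow_succ']

theorem pow_smul_inverse_pow_apply_of_apply_eq_smul {R M : Type*} [CommSemiring R]
    [AddCommMonoid M] [Module R M] {f : End R M} (hf : IsUnit f) {c : R} {v : M}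
    (hv : f v = c • v) (n : ℕ) : c ^ n • (Ring.inverse f ^ n) v = v := by
  rw [← map_smul, ← pow_apply_of_apply_eq_smul hv, ← mul_apply, Ring.inverse_pow,
    Ring.inverse_mul_cancel _ (hf.pow n), one_apply]

theorem tendsto_pow_smul_inverse_pow_apply_of_norm_lt {𝕜 E : Type*} [NormedField 𝕜]
    [SeminormedAddCommGroup E] [NormedSpace 𝕜 E] {f : End 𝕜 E} (hf : IsUnit f) {a c : 𝕜}
    {v : E} (hv : f v = c • v) (hac : ‖a‖ < ‖c‖) :
    Tendsto (fun n ↦ a ^ n • (Ring.inverse f ^ n) v) atTop (𝓝 0) := by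
  have hc : c ≠ 0 := norm_pos_iff.mp ((norm_nonneg a).trans_lt hac)
  have hratio : ‖a / c‖ < 1 := by rwa [norm_div, div_lt_one (norm_pos_iff.mpr hc)]
  have hseq (n : ℕ) : a ^ n • (Ring.inverse f ^ n) v = (a / c) ^ n • v :=
    calc a ^ n • (Ring.inverse f ^ n) v = (a / c) ^ n • c ^ n • (Ring.inverse f ^ n) v := by
          rw [smul_smul, ← mul_pow, div_mul_cancel₀ a hc]
      _ = (a / c) ^ n • v := by rw [pow_smul_inverse_pow_apply_of_apply_eq_smul hf hv]
  simpa only [hseq, zero_smul] using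
    (tendsto_pow_atTop_nhds_zero_of_norm_lt_one hratio).smul_const v

end Module.End

namespace LinearMap.IsSymmetric

open Module.End

variable {𝕜 E : Type*} [RCLike 𝕜] [NormedAddCommGroup E] [InnerProductSpace 𝕜 E]
  {T : E →ₗ[𝕜] E}

theorem starProjection_eigenspace_apply_of_ne (hT : T.IsSymmetric) {lam μ : 𝕜}
    [(eigenspace T μ).HasOrthogonalProjection] (hne : lam ≠ μ) {v : E}
    (hv : v ∈ eigenspace T lam) : (eigenspace T μ).starProjection v = 0 :=
  (Submodule.starProjection_apply_eq_zero_iff _).mpr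
    ((hT.orthogonalFamily_eigenspaces.isOrtho hne).le hv)

theorem tendsto_inverse_iteration_of_hasEigenvector (hT : T.IsSymmetric) {ε μ lam : 𝕜}
    [(eigenspace T μ).HasOrthogonalProjection] (hunit : IsUnit (T - ε • 1))
    (hclose : ∀ ν, HasEigenvalue T ν → ν ≠ μ → ‖μ - ε‖ < ‖ν - ε‖) {v : E}
    (hv : HasEigenvector T lam v) :
    Tendsto (fun n ↦ (μ - ε) ^ n • (Ring.inverse (T - ε • 1) ^ n) v) atTop
      (𝓝 ((eigenspace T μ).starProjection v)) := by
  have hSv : (T - ε • 1) v = (lam - ε) • v := by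
    rw [sub_apply, hv.apply_eq_smul, sub_smul, smul_apply, one_apply]
  by_cases hlam : lam = μ
  · subst hlam
    rw [Submodule.starProjection_eq_self_iff.mpr hv.1]
    simpa only [pow_smul_inverse_pow_apply_of_apply_eq_smul hunit hSv] using tendsto_const_nhds
  · rw [hT.starProjection_eigenspace_apply_of_ne hlam hv.1]
    exact tendsto_pow_smul_inverse_pow_apply_of_norm_lt hunit hSv
      (hclose lam (hasEigenvalue_of_hasEigenvector hv) hlam)

end LinearMap.IsSymmetric

theorem inverse_iteration_tendsto_general
    {E : Type*} [NormedAddCommGroup E] [InnerProductSpace ℂ E]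
    [FiniteDimensional ℂ E]
    (T : Module.End ℂ E) (hT : LinearMap.IsSymmetric T)
    (ε : ℝ) (hε : ¬ Module.End.HasEigenvalue T (ε : ℂ))
    (μ : ℂ)
    (hclose : ∀ ν : ℂ, Module.End.HasEigenvalue T ν → ν ≠ μ →
      ‖μ - (ε : ℂ)‖ < ‖ν - (ε : ℂ)‖)
    (ψ : E) :
    Filter.Tendsto
      (fun n : ℕ => (μ - (ε : ℂ)) ^ n •
        ((Ring.inverse (T - (ε : ℂ) • (1 : Module.End ℂ E)) ^ n) ψ))
      Filter.atTop
      (nhds (((Module.End.eigenspace T μ).orthogonalProjectionOnto ψ : E))) := by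
  have hunit := Module.End.isUnit_sub_smul_one_of_not_hasEigenvalue hε
  let b := (hT.eigenvectorBasis rfl).toBasis
  refine b.tendsto_apply_of_tendsto_apply
    (A := fun n ↦ (μ - (ε : ℂ)) ^ n • Ring.inverse (T - (ε : ℂ) • 1) ^ n)
    (L := (Module.End.eigenspace T μ).starProjection) (fun i ↦ ?_) ψ
  simpa only [b, OrthonormalBasis.coe_toBasis, LinearMap.smul_apply, ContinuousLinearMap.coe_coe] using
    hT.tendsto_inverse_iteration_of_hasEigenvector hunit hclose
      (hT.hasEigenvector_eigenvectorBasis rfl i)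

/-- Convergence of inverse iteration: if `ε` is not an eigenvalue of the self-adjoint
operator `T` (so `T − ε·id` is invertible) and `μ` is the eigenvalue of `T` closest to
`ε`, then `(μ − ε)ⁿ (T − ε·id)⁻ⁿ ψ → P ψ`, where `P` is the orthogonal projection onto
the `μ`-eigenspace. -/
theorem inverse_iteration_tendsto
    {E : Type*} [NormedAddCommGroup E] [InnerProductSpace ℂ E]
    [FiniteDimensional ℂ E] [Nontrivial E]
    (T : Module.End ℂ E) (hT : LinearMap.IsSymmetric T)
    (ε : ℝ) (hε : ¬ Module.End.HasEigenvalue T (ε : ℂ))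
    (μ : ℂ) (hμ : Module.End.HasEigenvalue T μ)
    (hclose : ∀ ν : ℂ, Module.End.HasEigenvalue T ν → ν ≠ μ →
      ‖μ - (ε : ℂ)‖ < ‖ν - (ε : ℂ)‖)
    (ψ : E) :
    Filter.Tendsto
      (fun n : ℕ => (μ - (ε : ℂ)) ^ n •
        ((Ring.inverse (T - (ε : ℂ) • (1 : Module.End ℂ E)) ^ n) ψ))
      Filter.atTop
      (nhds (((Module.End.eigenspace T μ).orthogonalProjectionOnto ψ : E))) :=
  inverse_iteration_tendsto_general T hT ε hε μ hclose ψ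
end

section
/- Let E be a nonzero finite-dimensional complex inner product space, T : E → E a self-adjoint linear map, and ε a real number that is not an eigenvalue of T, so that T − ε·id is invertible. Let μ be an eigenvalue of T, let δ > 0 be a real number such that δ ≤ |ν − ε| for every eigenvalue ν of T with ν ≠ μ, and let P denote the orthogonal projection of E onto the eigenspace ker(T − μ·id). Then for every ψ ∈ E and every natural number n, ‖(μ − ε)^n • ((T − ε·id)⁻¹)^n ψ − P ψ‖ ≤ (|μ − ε|/δ)^n · ‖ψ‖. -/
/-!
In an orthonormal eigenbasis `bᵢ` of `T`, with eigenvalues `λᵢ`, the operator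
`(μ - ε)ⁿ (T - ε)⁻ⁿ - P` is diagonal with entries `((μ - ε) / (λᵢ - ε))ⁿ - [λᵢ = μ]`. These
vanish when `λᵢ = μ` and are bounded by `(|μ - ε| / δ)ⁿ` otherwise, by the spectral gap; and an
operator that is diagonal in an orthonormal basis is bounded by the largest modulus of its entries.
-/

open Module

theorem Module.End.isUnit_sub_smul_one_of_not_hasEigenvalue_s13 {K V : Type*} [Field K]
    [AddCommGroup V] [Module K V] [FiniteDimensional K V] {f : End K V} {c : K}
    (hc : ¬ f.HasEigenvalue c) : IsUnit (f - c • 1) := by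
  rw [End.hasEigenvalue_iff_mem_spectrum, spectrum.mem_iff, not_not] at hc
  simpa [Algebra.algebraMap_eq_smul_one] using hc.neg

theorem Ring.inverse_apply_of_apply_eq_smul {K V : Type*} [Field K] [AddCommGroup V]
    [Module K V] {f : End K V} (hf : IsUnit f) {c : K} (hc : c ≠ 0) {v : V}
    (hv : f v = c • v) : Ring.inverse f v = c⁻¹ • v := by
  obtain ⟨u, rfl⟩ := hf
  have : (u : End K V) (c⁻¹ • v) = v := by rw [map_smul, hv, inv_smul_smul₀ hc]
  rw [Ring.inverse_unit]
  conv_lhs => rw [← this]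
  rw [← End.mul_apply, Units.inv_mul, End.one_apply]

theorem EuclideanSpace.norm_le_of_forall_norm_le {𝕜 ι : Type*} [RCLike 𝕜] [Fintype ι]
    {x y : EuclideanSpace 𝕜 ι} {C : ℝ} (hC : 0 ≤ C) (h : ∀ i, ‖x i‖ ≤ C * ‖y i‖) :
    ‖x‖ ≤ C * ‖y‖ := by
  refine le_of_sq_le_sq ?_ (by positivity)
  rw [EuclideanSpace.norm_sq_eq, mul_pow, EuclideanSpace.norm_sq_eq, Finset.mul_sum]
  gcongr with i
  rw [← mul_pow]
  gcongr
  exact h i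

theorem OrthonormalBasis.norm_apply_le_of_apply_eq_smul {𝕜 E ι : Type*} [RCLike 𝕜]
    [NormedAddCommGroup E] [InnerProductSpace 𝕜 E] [Fintype ι] (b : OrthonormalBasis ι 𝕜 E)
    {f : E →ₗ[𝕜] E} {d : ι → 𝕜} (hf : ∀ i, f (b i) = d i • b i) {C : ℝ} (hC : 0 ≤ C)
    (hd : ∀ i, ‖d i‖ ≤ C) (x : E) : ‖f x‖ ≤ C * ‖x‖ := by
  have hrepr : ∀ i, b.repr (f x) i = d i * b.repr x i := by
    intro i
    conv_lhs => rw [← b.sum_repr x]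
    classical
    simp [map_sum, hf, smul_smul, b.repr_self, Pi.single_apply, mul_comm]
  rw [← b.repr.norm_map, ← b.repr.norm_map x]
  refine EuclideanSpace.norm_le_of_forall_norm_le hC fun i => ?_
  rw [hrepr, norm_mul]
  exact mul_le_mul_of_nonneg_right (hd i) (norm_nonneg _)

theorem LinearMap.IsSymmetric.starProjection_eigenspace_apply {𝕜 E : Type*} [RCLike 𝕜]
    [NormedAddCommGroup E] [InnerProductSpace 𝕜 E] [FiniteDimensional 𝕜 E] {T : E →ₗ[𝕜] E}
    (hT : T.IsSymmetric) (μ : 𝕜) {ν : 𝕜} {v : E} (hv : v ∈ End.eigenspace T ν) :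
    (End.eigenspace T μ).starProjection v = if ν = μ then v else 0 := by
  split_ifs with h
  · exact Submodule.starProjection_eq_self_iff.mpr (h ▸ hv)
  · exact (Submodule.starProjection_apply_eq_zero_iff _).mpr
      ((hT.orthogonalFamily_eigenspaces.isOrtho h).le hv)

theorem inverse_iteration_rate_general
    {E : Type*} [NormedAddCommGroup E] [InnerProductSpace ℂ E]
    [FiniteDimensional ℂ E]
    (T : Module.End ℂ E) (hT : LinearMap.IsSymmetric T)
    (ε : ℝ) (hε : ¬ Module.End.HasEigenvalue T (ε : ℂ))
    (μ : ℂ)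
    (δ : ℝ) (hδ : 0 < δ)
    (hgap : ∀ ν : ℂ, Module.End.HasEigenvalue T ν → ν ≠ μ → δ ≤ ‖ν - (ε : ℂ)‖)
    (ψ : E) (n : ℕ) :
    ‖(μ - (ε : ℂ)) ^ n •
          ((Ring.inverse (T - (ε : ℂ) • (1 : Module.End ℂ E)) ^ n) ψ) -
        (((Module.End.eigenspace T μ).orthogonalProjectionOnto ψ : E))‖ ≤
      (‖μ - (ε : ℂ)‖ / δ) ^ n * ‖ψ‖ := by
  set b := hT.eigenvectorBasis rfl
  set ev := hT.eigenvalues rfl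
  have hshift : ∀ i, (ev i : ℂ) - ε ≠ 0 := fun i h =>
    hε (sub_eq_zero.mp h ▸ hT.hasEigenvalue_eigenvalues rfl i)
  rw [Submodule.coe_orthogonalProjectionOnto_apply]
  refine b.norm_apply_le_of_apply_eq_smul
    (f := (μ - ε) ^ n • Ring.inverse (T - (ε : ℂ) • 1) ^ n - (End.eigenspace T μ).starProjection)
    (d := fun i => ((μ - ε) / ((ev i : ℂ) - ε)) ^ n - if (ev i : ℂ) = μ then 1 else 0)
    ?_ (by positivity) ?_ ψ
  · intro i
    have hb : End.HasEigenvector T (ev i) (b i) := hT.hasEigenvector_eigenvectorBasis rfl i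
    have hinv : Ring.inverse (T - (ε : ℂ) • 1) (b i) = ((ev i : ℂ) - ε)⁻¹ • b i :=
      Ring.inverse_apply_of_apply_eq_smul (End.isUnit_sub_smul_one_of_not_hasEigenvalue_s13 hε)
        (hshift i) (by simp [End.mem_eigenspace_iff.mp hb.1, sub_smul])
    have hpow := End.HasEigenvector.pow_apply ⟨End.mem_eigenspace_iff.mpr hinv, hb.2⟩ n
    simp only [LinearMap.sub_apply, LinearMap.smul_apply, ContinuousLinearMap.coe_coe, hpow,
      hT.starProjection_eigenspace_apply μ hb.1]
    split_ifs <;> simp [div_eq_mul_inv, mul_pow, smul_smul, sub_smul]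
  · intro i
    split_ifs with h
    · rw [h, div_self (h ▸ hshift i), one_pow, sub_self, norm_zero]
      positivity
    · rw [sub_zero, norm_pow, norm_div]
      gcongr
      exact hgap _ (hT.hasEigenvalue_eigenvalues rfl i) h

/-- Quantitative convergence of inverse iteration: if every eigenvalue of `T` other than
`μ` is at distance at least `δ` from the shift `ε`, then
`‖(μ − ε)ⁿ (T − ε·id)⁻ⁿ ψ − P ψ‖ ≤ (|μ − ε|/δ)ⁿ ‖ψ‖`. -/
theorem inverse_iteration_rate
    {E : Type*} [NormedAddCommGroup E] [InnerProductSpace ℂ E]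
    [FiniteDimensional ℂ E] [Nontrivial E]
    (T : Module.End ℂ E) (hT : LinearMap.IsSymmetric T)
    (ε : ℝ) (hε : ¬ Module.End.HasEigenvalue T (ε : ℂ))
    (μ : ℂ) (hμ : Module.End.HasEigenvalue T μ)
    (δ : ℝ) (hδ : 0 < δ)
    (hgap : ∀ ν : ℂ, Module.End.HasEigenvalue T ν → ν ≠ μ → δ ≤ ‖ν - (ε : ℂ)‖)
    (ψ : E) (n : ℕ) :
    ‖(μ - (ε : ℂ)) ^ n •
          ((Ring.inverse (T - (ε : ℂ) • (1 : Module.End ℂ E)) ^ n) ψ) -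
        (((Module.End.eigenspace T μ).orthogonalProjectionOnto ψ : E))‖ ≤
      (‖μ - (ε : ℂ)‖ / δ) ^ n * ‖ψ‖ :=
  inverse_iteration_rate_general T hT ε hε μ δ hδ hgap ψ n
end

section
/- Let H be an n×n Hermitian complex matrix such that I − H² is positive semidefinite, and let S denote the positive semidefinite square root of I − H². Then the block matrix U = fromBlocks(H, −S, S, H) is unitary, and for every natural number k, the top-left n×n block of U^k equals T_k(H), the evaluation at H of the k-th Chebyshev polynomial of the first kind. -/
/-!
The block matrix `fromBlocks a (-b) b a` multiplies like the complex number `a + i b`. Since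
`S = √(1 - H²)` is a function of `1 - H²`, it commutes with `H`, so `fromBlocks H (-S) S H`
behaves like `H + i S` with `H² + S² = 1`. This gives unitarity, and multiplication by `H + i S`
reproduces the Chebyshev recurrences `Tₖ₊₁ = X Tₖ - (1 - X²) Uₖ₋₁` and `Uₖ = X Uₖ₋₁ + Tₖ`,
so the `k`-th power is `fromBlocks Tₖ(H) (-S Uₖ₋₁(H)) (S Uₖ₋₁(H)) Tₖ(H)`.
-/

open Matrix Polynomial
open scoped ComplexOrder

/-- The positive semidefinite square root of a positive semidefinite matrix (as defined in
the older Mathlib, where it was `Matrix.PosSemidef.sqrt`). -/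
noncomputable def Matrix.PosSemidef.sqrt {n : Type*} [Fintype n] [DecidableEq n]
    {A : Matrix n n ℂ} (hA : A.PosSemidef) : Matrix n n ℂ :=
  hA.1.eigenvectorUnitary.1 * diagonal ((↑) ∘ (√·) ∘ hA.1.eigenvalues) *
    (star hA.1.eigenvectorUnitary : Matrix n n ℂ)

namespace Matrix

section BlockRotation

variable {m α : Type*}

def blockRotation [Neg α] (a b : Matrix m m α) : Matrix (m ⊕ m) (m ⊕ m) α :=
  fromBlocks a (-b) b a

theorem blockRotation_mul [Fintype m] [Ring α] (a b c d : Matrix m m α) :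
    blockRotation a b * blockRotation c d = blockRotation (a * c - b * d) (a * d + b * c) := by
  simp only [blockRotation, fromBlocks_multiply, mul_neg, neg_mul, neg_add, sub_eq_add_neg]
  congr 1 <;> abel

theorem blockRotation_one_zero [DecidableEq m] [Ring α] :
    blockRotation (1 : Matrix m m α) 0 = 1 := by
  rw [blockRotation, neg_zero, fromBlocks_one]

theorem conjTranspose_blockRotation [AddGroup α] [StarAddMonoid α] (a b : Matrix m m α) :
    (blockRotation a b)ᴴ = blockRotation aᴴ (-bᴴ) := by
  rw [blockRotation, blockRotation, fromBlocks_conjTranspose, conjTranspose_neg, neg_neg]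

theorem blockRotation_mem_unitaryGroup [Fintype m] [DecidableEq m] [CommRing α] [StarRing α]
    {H S : Matrix m m α} (hH : H.IsHermitian) (hS : S.IsHermitian) (hHS : Commute H S)
    (hSS : S * S = 1 - H ^ 2) :
    blockRotation H S ∈ unitaryGroup (m ⊕ m) α := by
  rw [mem_unitaryGroup_iff', star_eq_conjTranspose, conjTranspose_blockRotation, hH.eq, hS.eq,
    blockRotation_mul, neg_mul, sub_neg_eq_add, hSS, neg_mul, ← sub_eq_add_neg, hHS.eq, sub_self,
    ← sq, add_sub_cancel, blockRotation_one_zero]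

theorem blockRotation_pow_eq_chebyshev [Fintype m] [DecidableEq m] [CommRing α]
    {H S : Matrix m m α} (hHS : Commute H S) (hSS : S * S = 1 - H ^ 2) (k : ℕ) :
    blockRotation H S ^ k =
      blockRotation (aeval H (Chebyshev.T α k)) (S * aeval H (Chebyshev.U α (k - 1))) := by
  induction k with
  | zero => simp [Chebyshev.T_zero, Chebyshev.U_neg_one, blockRotation_one_zero]
  | succ k ih =>
    have hT := Chebyshev.T_eq_X_mul_T_sub_pol_U α ((k : ℤ) - 1)
    have hU := Chebyshev.U_eq_X_mul_U_add_T α ((k : ℤ) - 1)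
    rw [sub_add_cancel] at hT hU
    rw [show (k : ℤ) - 1 + 2 = k + 1 by ring] at hT
    rw [pow_succ', ih, blockRotation_mul, Nat.cast_succ, add_sub_cancel_right, hT, hU]
    simp only [map_sub, map_add, _root_.map_mul, map_one, map_pow, aeval_X, ← hSS, mul_assoc,
      mul_add]
    rw [← mul_assoc H S, hHS.eq, mul_assoc]

end BlockRotation

section Sqrt

open scoped MatrixOrder

variable {n : Type*} [Fintype n] [DecidableEq n] {A : Matrix n n ℂ}

theorem PosSemidef.sqrt_eq_cfcSqrt (hA : A.PosSemidef) : hA.sqrt = CFC.sqrt A := by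
  rw [CFC.sqrt_eq_real_sqrt A hA.nonneg, cfcₙ_eq_cfc (hf0 := Real.sqrt_zero), hA.1.cfc_eq]
  simp [IsHermitian.cfc, PosSemidef.sqrt, Unitary.conjStarAlgAut_apply]

theorem PosSemidef.sqrt_mul_self (hA : A.PosSemidef) : hA.sqrt * hA.sqrt = A := by
  rw [hA.sqrt_eq_cfcSqrt]
  exact CFC.sqrt_mul_sqrt_self A hA.nonneg

theorem PosSemidef.isHermitian_sqrt (hA : A.PosSemidef) : hA.sqrt.IsHermitian := by
  rw [hA.sqrt_eq_cfcSqrt]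
  exact (CFC.sqrt_nonneg A).posSemidef.isHermitian

theorem PosSemidef.commute_sqrt {B : Matrix n n ℂ} (hA : A.PosSemidef) (hAB : Commute B A) :
    Commute B hA.sqrt := by
  rw [hA.sqrt_eq_cfcSqrt]
  exact (hAB.symm.cfcₙ_nnreal NNReal.sqrt).symm

end Sqrt

end Matrix

/-- Qubitization: for a Hermitian matrix `H` with `I − H²` positive semidefinite and
`S = √(I − H²)` its positive semidefinite square root, the block matrix
`U = fromBlocks(H, −S, S, H)` is unitary and the top-left block of `Uᵏ` is `T_k(H)`,
the `k`-th Chebyshev polynomial of the first kind evaluated at `H`. -/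
theorem qubitization_chebyshev (n : ℕ) (H : Matrix (Fin n) (Fin n) ℂ)
    (hH : H.IsHermitian) (hpsd : (1 - H ^ 2).PosSemidef) :
    Matrix.fromBlocks H (-hpsd.sqrt) hpsd.sqrt H ∈ Matrix.unitaryGroup (Fin n ⊕ Fin n) ℂ ∧
      ∀ k : ℕ,
        ((Matrix.fromBlocks H (-hpsd.sqrt) hpsd.sqrt H) ^ k).toBlocks₁₁ =
          (Polynomial.aeval H) (Polynomial.Chebyshev.T ℂ (k : ℤ)) := by
  have hHS : Commute H hpsd.sqrt :=
    hpsd.commute_sqrt ((Commute.one_right H).sub_right ((Commute.refl H).pow_right 2))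
  refine ⟨?_, fun k => ?_⟩
  · exact blockRotation_mem_unitaryGroup hH hpsd.isHermitian_sqrt hHS hpsd.sqrt_mul_self
  · rw [← blockRotation, blockRotation_pow_eq_chebyshev hHS hpsd.sqrt_mul_self, blockRotation,
      toBlocks_fromBlocks₁₁]
end
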